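/- arXiv:1506.01485 — 3 statements merged into one kernel-verified Lean document; each statement's English description precedes it below -/
import Mathlib

section
/- Let Λ be a semiprimary ring and 𝔞 ⊆ Λ an idempotent two-sided ideal. Then there exists an idempotent e ∈ Λ with 𝔞 = ΛeΛ. -/
/-!
STATEMENT 5: In a semiprimary ring `Λ` (Jacobson radical nilpotent and `Λ/J(Λ)`
semisimple), every idempotent two-sided ideal `𝔞` is of the form `ΛeΛ` for some
idempotent `e ∈ Λ`.  Two-sided ideals are formalized as left ideals closed under
right multiplication, `ΛeΛ` as the left ideal generated by all `r * e * s`.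
-/

/-- `Λ` is semiprimary: the Jacobson radical `J = J(Λ)` is nilpotent and the
quotient `Λ/J` is a semisimple ring (equivalently, semisimple as `Λ`-module). -/
def IsSemiprimaryRing' (Λ : Type) [Ring Λ] : Prop :=
  (∃ n : ℕ, (Ideal.jacobson (⊥ : Ideal Λ)) ^ n = ⊥) ∧
    IsSemisimpleModule Λ (Λ ⧸ Ideal.jacobson (⊥ : Ideal Λ))

/-!
Let `J` be the Jacobson radical. As `Λ/J` is semisimple, the image of `𝔞` in `Λ/J` is a direct
summand, and projecting `1` onto it gives `a ∈ 𝔞` that is a right unit for `𝔞` modulo `J`. In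
particular `a` is idempotent modulo the nilpotent ideal `J`, so it lifts to an idempotent `e ∈ 𝔞`
that is still a right unit modulo `J`. Then `𝔞 = 𝔞𝔞 ⊆ ΛeΛ + 𝔞J`, and iterating gives
`𝔞 ⊆ ΛeΛ + 𝔞Jⁿ = ΛeΛ`.
-/

namespace Ideal

variable {R : Type*} [Ring R]

theorem exists_mem_forall_sub_mul_mem (J : Submodule R R) [IsSemisimpleModule R (R ⧸ J)]
    (I : Ideal R) : ∃ a ∈ I, ∀ m ∈ I, m - m * a ∈ J := by
  obtain ⟨c, hc⟩ := exists_isCompl (Submodule.map J.mkQ I)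
  let p := (Submodule.map J.mkQ I).projection c hc
  obtain ⟨a, ha, hpa⟩ := Submodule.mem_map.mp (Submodule.projection_apply_mem hc (J.mkQ 1))
  refine ⟨a, ha, fun m hm => (Submodule.Quotient.eq J).mp ?_⟩
  calc J.mkQ m = p (J.mkQ m) :=
        (Submodule.projection_apply_of_mem_left hc (Submodule.mem_map_of_mem hm)).symm
    _ = m • p (J.mkQ 1) := by rw [← map_smul, ← map_smul, smul_eq_mul, mul_one]
    _ = J.mkQ (m * a) := by rw [← hpa, ← map_smul, smul_eq_mul]

theorem exists_isIdempotentElem_mem_sub_mem {I J : Ideal R} [J.IsTwoSided]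
    (hJ : ∀ x ∈ J, IsNilpotent x) {a : R} (ha : a ∈ I) (haa : a - a * a ∈ J) :
    ∃ e ∈ I, IsIdempotentElem e ∧ e - a ∈ J := by
  obtain ⟨n, hn⟩ := hJ _ haa
  have hN : (a - a ^ 2) ^ (n + 1) = 0 := by rw [pow_succ, sq, hn, zero_mul]
  refine ⟨1 - (1 - a ^ (n + 1)) ^ (n + 1), ?_, isIdempotentElem_one_sub_one_sub_pow_pow a _ hN, ?_⟩
  · -- `1 - (1 - x) ^ N = (∑ i < N, (1 - x) ^ i) * x`
    rw [← geom_sum_mul_neg, sub_sub_cancel, pow_succ]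
    exact I.mul_mem_left _ (I.mul_mem_left _ ha)
  · have hidem : IsIdempotentElem (Ideal.Quotient.mk J a) :=
      (Ideal.Quotient.eq.mpr haa).symm
    rw [← Ideal.Quotient.eq]
    simp only [map_sub, map_one, map_pow, hidem.pow_succ_eq, hidem.one_sub.pow_succ_eq,
      sub_sub_cancel]

instance isTwoSided_span_mul_mul (e : R) : (span {x : R | ∃ r s, x = r * e * s}).IsTwoSided := by
  refine ⟨fun t hx => ?_⟩
  induction hx using Submodule.span_induction with
  | mem x hx =>
    obtain ⟨r, s, rfl⟩ := hx
    exact subset_span ⟨r, s * t, by simp only [mul_assoc]⟩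
  | zero => simp
  | add x y _ _ hx hy => rw [add_mul]; exact add_mem hx hy
  | smul r x _ hx => rw [smul_eq_mul, mul_assoc]; exact mul_mem_left _ r hx

theorem span_mul_mul_le {I : Ideal R} [I.IsTwoSided] {e : R} (he : e ∈ I) :
    span {x : R | ∃ r s, x = r * e * s} ≤ I := by
  rw [span_le]
  rintro _ ⟨r, s, rfl⟩
  exact I.mul_mem_right s (I.mul_mem_left r he)

theorem le_span_mul_mul_sup_mul {I J : Ideal R} (hI : I * I = I) {e : R}
    (he : ∀ z ∈ I, z - z * e ∈ J) : I ≤ span {x : R | ∃ r s, x = r * e * s} ⊔ I * J := by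
  conv_lhs => rw [← hI]
  refine mul_le.mpr fun y hy z hz => ?_
  have hsplit : y * z = y * z * e * 1 + y * (z - z * e) := by noncomm_ring
  rw [hsplit]
  exact add_mem (Submodule.mem_sup_left (subset_span ⟨y * z, 1, rfl⟩))
    (Submodule.mem_sup_right (mul_mem_mul hy (he z hz)))

theorem le_of_le_sup_mul_of_pow_eq_bot {I B J : Ideal R} [B.IsTwoSided] {n : ℕ}
    (h : I ≤ B ⊔ I * J) (hJ : J ^ n = ⊥) : I ≤ B := by
  have key : ∀ k : ℕ, I ≤ B ⊔ I * J ^ k := by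
    intro k
    induction k with
    | zero =>
      rw [Submodule.pow_zero, one_eq_top]
      exact le_sup_of_le_right fun x hx => mul_one x ▸ mul_mem_mul hx Submodule.mem_top
    | succ k ih =>
      calc I ≤ B ⊔ I * J := h
        _ ≤ B ⊔ (B ⊔ I * J ^ k) * J := sup_le_sup_left (mul_mono_left ih) B
        _ = B ⊔ B * J ⊔ I * J ^ (k + 1) := by
          rw [sup_mul, ← sup_assoc, Ideal.mul_assoc, Submodule.pow_succ]
        _ = B ⊔ I * J ^ (k + 1) := by rw [sup_mul_right_self]
  simpa [hJ] using key n

end Ideal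

theorem idempotent_ideal_eq_span_idempotent
    (Λ : Type) [Ring Λ] (hΛ : IsSemiprimaryRing' Λ)
    (𝔞 : Ideal Λ) (htwosided : ∀ a ∈ 𝔞, ∀ r : Λ, a * r ∈ 𝔞)
    (hidem : 𝔞 * 𝔞 = 𝔞) :
    ∃ e : Λ, IsIdempotentElem e ∧
      𝔞 = Ideal.span {x : Λ | ∃ r s : Λ, x = r * e * s} := by
  obtain ⟨⟨n, hJn⟩, _⟩ := hΛ
  set J := Ideal.jacobson (⊥ : Ideal Λ)
  have : 𝔞.IsTwoSided := ⟨fun r ha => htwosided _ ha r⟩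
  have hJ : ∀ x ∈ J, IsNilpotent x := fun x hx => ⟨n, by simpa [hJn] using Ideal.pow_mem_pow hx n⟩
  obtain ⟨a, ha, ha_unit⟩ := Ideal.exists_mem_forall_sub_mul_mem J 𝔞
  obtain ⟨e, he𝔞, he, hea⟩ := Ideal.exists_isIdempotentElem_mem_sub_mem hJ ha (ha_unit a ha)
  have he_unit : ∀ z ∈ 𝔞, z - z * e ∈ J := fun z hz => by
    have := J.sub_mem (ha_unit z hz) (J.mul_mem_left z hea)
    rwa [mul_sub, sub_sub_sub_cancel_right] at this
  refine ⟨e, he, le_antisymm ?_ (Ideal.span_mul_mul_le he𝔞)⟩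
  exact Ideal.le_of_le_sup_mul_of_pow_eq_bot (Ideal.le_span_mul_mul_sup_mul hidem he_unit) hJn
end

section
/- Let A be a highest weight category with standard objects Δ₁,…,Δₙ and let Γ = End(Δₙ). Then Δₙ is a projective object of A, and for every object X of A with Hom(Δₙ, X) ≠ 0 considered via the counit ε_X : Hom(Δₙ,X) ⊗_Γ Δₙ → X, if X lies in Filt(Δ₁,…,Δₙ) then ε_X is a monomorphism. -/
/-!
STATEMENT 10: Let `A` be a highest weight category with standard objects
`Δ₁, …, Δₙ` and `Γ = End Δₙ`.  Then `Δₙ` is projective, and for every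
`X ∈ Filt(Δ₁, …, Δₙ)` the counit `ε_X : Hom(Δₙ, X) ⊗_Γ Δₙ → X` is a
monomorphism.  Since `Γ` is a division ring, `Hom(Δₙ, X) ⊗_Γ Δₙ ≅ Δₙ^r` via a
`Γ`-basis of `Hom(Δₙ, X)`, so the counit being mono is formalized as: for every
`Γ`-linearly independent family `φ₁, …, φ_r : Δₙ → X` (with the right
`Γ = End Δₙ`-action by precomposition), the induced map `Δₙ^r → X` is a
monomorphism.
-/

open CategoryTheory Limits

attribute [local instance] CategoryTheory.Abelian.hasFiniteBiproducts

universe w v u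

variable (A : Type u) [Category.{v} A] [Abelian A]

/-- Objects of `A` admitting a finite filtration whose factors satisfy `S`. -/
inductive FiltBy (S : A → Prop) : A → Prop
  | of_isZero (X : A) : IsZero X → FiltBy S X
  | step (Sc : ShortComplex A) : Sc.ShortExact → FiltBy S Sc.X₁ → S Sc.X₃ → FiltBy S Sc.X₂

/-- Objects of finite (composition) length. -/
inductive FinLength : A → Prop
  | of_isZero (X : A) : IsZero X → FinLength X
  | step (Sc : ShortComplex A) : Sc.ShortExact → FinLength Sc.X₁ → Simple Sc.X₃ → FinLength Sc.X₂

/-- `A` is a length category: every object has a finite composition series. -/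
def IsLengthCategory : Prop := ∀ X : A, FinLength A X

/-- `A` has only finitely many simple objects up to isomorphism. -/
def HasFinitelyManySimples : Prop :=
  ∃ (k : ℕ) (T : Fin k → A), (∀ i, Simple (T i)) ∧
    ∀ X : A, Simple X → ∃ i, Nonempty (X ≅ T i)

/-- A highest weight structure on an abelian category: standard objects
`Δ 0, …, Δ (n-1)` together with short exact sequences `0 → U i → P i → Δ i → 0`
such that each `End (Δ i)` is a division ring, `Hom (Δ i, Δ j) = 0` for `i > j`,
`U i` is filtered by `Δ (i+1), …, Δ (n-1)` and `⨁ P` is a projective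
generator. -/
structure HighestWeightStructure where
  n : ℕ
  Δ : Fin n → A
  P : Fin n → A
  U : Fin n → A
  ι : ∀ i, U i ⟶ P i
  π : ∀ i, P i ⟶ Δ i
  w : ∀ i, ι i ≫ π i = 0
  shortExact : ∀ i, (ShortComplex.mk (ι i) (π i) (w i)).ShortExact
  endo_division : ∀ i, ¬ IsZero (Δ i) ∧ ∀ φ : Δ i ⟶ Δ i, φ ≠ 0 → IsIso φ
  hom_vanish : ∀ i j : Fin n, j < i → ∀ φ : Δ i ⟶ Δ j, φ = 0
  U_filt : ∀ i, FiltBy A (fun X => ∃ j : Fin n, i < j ∧ Nonempty (X ≅ Δ j)) (U i)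
  projective : Projective (⨁ P)
  generator : ∀ X : A, ∃ (r : ℕ) (p : (⨁ fun _ : Fin r => ⨁ P) ⟶ X), Epi p

/-
`Uₙ` is filtered by standard objects of larger index, of which there are none, so `Δₙ ≅ Pₙ`
is a summand of the projective generator. For the counit, a `Γ`-independent family
`φᵢ : Δₙ ⟶ X` is shown to admit no relation with coefficients `Z ⟶ Δₙ` for any `Z` (which is
injectivity of `Δₙ^r ⟶ X`) by induction along a filtration step `0 → X₁ → X₂ → X₃ → 0`. If all
`φᵢ` vanish on `X₃` they factor through `X₁`. Otherwise `X₃ ≅ Δₙ`, since `Hom(Δₙ, Δⱼ) = 0` for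
`j < n`; some `φₖ` then maps isomorphically onto `X₃`, and subtracting `Γ`-multiples of `φₖ` from
the other `φᵢ` (Gaussian elimination) makes those factor through `X₁`.
-/

section Preadditive

variable {C : Type u} [Category.{v} C] [Preadditive C]

/-- With `Z = D` this is linear independence over `End D`; for all `Z` at once it says that
`biproduct.desc φ` is a monomorphism. -/
def HomIndependent (Z : C) {D X : C} {ι : Type*} [Fintype ι] (φ : ι → (D ⟶ X)) : Prop :=
  ∀ c : ι → (Z ⟶ D), ∑ i, c i ≫ φ i = 0 → ∀ i, c i = 0

namespace HomIndependent

variable {Z D X Y : C}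

theorem of_comp {ι : Type*} [Fintype ι] {ψ : ι → (D ⟶ X)} {f : X ⟶ Y}
    (h : HomIndependent Z fun i => ψ i ≫ f) : HomIndependent Z ψ := fun c hc =>
  h c (by simp only [← Category.assoc, ← Preadditive.sum_comp, hc, zero_comp])

theorem comp_mono {ι : Type*} [Fintype ι] {ψ : ι → (D ⟶ X)} {f : X ⟶ Y} [Mono f]
    (h : HomIndependent Z ψ) : HomIndependent Z fun i => ψ i ≫ f := fun c hc =>
  h c (zero_of_comp_mono f (by simpa only [Preadditive.sum_comp, Category.assoc] using hc))

theorem comp_succAbove {m : ℕ} {φ : Fin (m + 1) → (D ⟶ X)} (h : HomIndependent Z φ)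
    (k : Fin (m + 1)) : HomIndependent Z fun i => φ (k.succAbove i) := by
  intro c hc i
  have hrel : ∑ j, Fin.insertNth (α := fun _ => Z ⟶ D) k 0 c j ≫ φ j = 0 := by
    simpa [Fin.sum_univ_succAbove _ k] using hc
  simpa using h _ hrel (k.succAbove i)

theorem isEmpty_of_isZero {ι : Type*} [Fintype ι] {φ : ι → (D ⟶ X)} (hD : ¬ IsZero D)
    (hX : IsZero X) (h : HomIndependent D φ) : IsEmpty ι :=
  ⟨fun i => hD ((IsZero.iff_id_eq_zero D).2
    (h (fun _ => 𝟙 D) (Finset.sum_eq_zero fun _ _ => hX.eq_of_tgt _ _) i))⟩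

theorem of_mono_comp_of_succAbove {m : ℕ} {φ : Fin (m + 1) → (D ⟶ X)} (g : X ⟶ Y)
    (k : Fin (m + 1)) [Mono (φ k ≫ g)] (hg : ∀ i, φ (k.succAbove i) ≫ g = 0)
    (h : HomIndependent Z fun i => φ (k.succAbove i)) : HomIndependent Z φ := by
  intro u hu
  have huk : u k = 0 := by
    refine zero_of_comp_mono (φ k ≫ g) ?_
    simpa [Fin.sum_univ_succAbove _ k, Preadditive.sum_comp, hg] using congrArg (· ≫ g) hu
  have hrest := h (fun i => u (k.succAbove i))
    (by simpa [Fin.sum_univ_succAbove _ k, huk] using hu)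
  intro j
  rcases Fin.eq_self_or_eq_succAbove k j with rfl | ⟨i, rfl⟩
  · exact huk
  · exact hrest i

theorem sub_comp {ι : Type*} [Fintype ι] [DecidableEq ι] {φ : ι → (D ⟶ X)}
    (h : HomIndependent Z φ) (k : ι) (d : ι → (D ⟶ D)) (hd : d k = 0) :
    HomIndependent Z fun j => φ j - d j ≫ φ k := by
  intro c hc
  set s := ∑ j, c j ≫ d j
  have hrel : ∑ j, (c - Pi.single k s : ι → (Z ⟶ D)) j ≫ φ j = 0 := by
    simpa [Preadditive.sub_comp, Preadditive.comp_sub, Finset.sum_sub_distrib,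
      Preadditive.sum_comp, s, Pi.single_apply, ite_comp] using hc
  have hoff : ∀ j, j ≠ k → c j = 0 := fun j hj => by simpa [hj] using h _ hrel j
  have hs : s = 0 := Finset.sum_eq_zero fun j _ => by
    rcases eq_or_ne j k with rfl | hj
    · rw [hd, comp_zero]
    · rw [hoff j hj, zero_comp]
  intro j
  rcases eq_or_ne j k with rfl | hj
  · simpa [hs] using h _ hrel j
  · exact hoff j hj

theorem sub_comp_iff {ι : Type*} [Fintype ι] [DecidableEq ι] {φ : ι → (D ⟶ X)} (k : ι)
    (d : ι → (D ⟶ D)) (hd : d k = 0) :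
    HomIndependent Z (fun j => φ j - d j ≫ φ k) ↔ HomIndependent Z φ :=
  ⟨fun h => by simpa [hd] using h.sub_comp k (-d) (by simp [hd]), fun h => h.sub_comp k d hd⟩

end HomIndependent

theorem mono_biproduct_desc_iff_homIndependent [HasFiniteBiproducts C] {D X : C} {ι : Type}
    [Fintype ι] (φ : ι → (D ⟶ X)) :
    Mono (biproduct.desc φ) ↔ ∀ Z, HomIndependent Z φ := by
  rw [Preadditive.mono_iff_cancel_zero]
  constructor
  · intro h Z c hc i
    simpa using congrArg (· ≫ biproduct.π _ i)
      (h Z (biproduct.lift c) (by simpa [biproduct.lift_desc]))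
  · intro h Z u hu
    refine biproduct.hom_ext _ _ fun i => ?_
    refine (h Z (fun i => u ≫ biproduct.π _ i) ?_ i).trans zero_comp.symm
    rw [← biproduct.lift_desc, ← hu]
    congr 1
    ext
    simp

theorem exists_sub_comp_comp_eq_zero {ι : Type*} [DecidableEq ι] {D X : C} {φ : ι → (D ⟶ X)}
    (g : X ⟶ D) (k : ι) [IsIso (φ k ≫ g)] :
    ∃ d : ι → (D ⟶ D), d k = 0 ∧ ∀ j, j ≠ k → (φ j - d j ≫ φ k) ≫ g = 0 := by
  refine ⟨fun j => if j = k then 0 else (φ j ≫ g) ≫ inv (φ k ≫ g), by simp, fun j hj => ?_⟩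
  simp [hj, Preadditive.sub_comp]

end Preadditive

section Abelian

variable {A}

theorem FiltBy.isZero_of_forall_not {S : A → Prop} (h : ∀ Z, ¬ S Z) {X : A}
    (hX : FiltBy A S X) : IsZero X := by
  induction hX with
  | of_isZero _ hY => exact hY
  | step _ _ _ hS₃ _ => exact absurd hS₃ (h _)

theorem HomIndependent.of_shortExact_of_iso {D Z : A} (hdiv : ∀ a : D ⟶ D, a ≠ 0 → IsIso a)
    {Sc : ShortComplex A} (hse : Sc.ShortExact) (e : Sc.X₃ ≅ D)
    (ih : ∀ {r : ℕ} (ψ : Fin r → (D ⟶ Sc.X₁)), HomIndependent D ψ → HomIndependent Z ψ)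
    {m : ℕ} {φ : Fin (m + 1) → (D ⟶ Sc.X₂)} (k : Fin (m + 1)) (hk : φ k ≫ Sc.g ≠ 0)
    (h : HomIndependent D φ) : HomIndependent Z φ := by
  have : IsIso (φ k ≫ Sc.g ≫ e.hom) :=
    hdiv _ fun h0 => hk (by simpa using h0 =≫ e.inv)
  obtain ⟨d, hdk, hd⟩ := exists_sub_comp_comp_eq_zero (φ := φ) (Sc.g ≫ e.hom) k
  set φ' := fun j => φ j - d j ≫ φ k
  have hφ'g : ∀ i, φ' (k.succAbove i) ≫ Sc.g = 0 := fun i =>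
    (cancel_mono e.hom).1
      (by simpa [φ', Preadditive.sub_comp] using hd _ (Fin.succAbove_ne k i))
  have := hse.mono_f
  set ψ := fun i => hse.exact.lift _ (hφ'g i)
  have hψ : (fun i => φ' (k.succAbove i)) = fun i => ψ i ≫ Sc.f :=
    funext fun i => (hse.exact.lift_f _ _).symm
  have hψind : HomIndependent D ψ := by
    have := (h.sub_comp k d hdk).comp_succAbove k
    rw [hψ] at this
    exact this.of_comp
  rw [← HomIndependent.sub_comp_iff k d hdk]
  have : Mono (φ' k ≫ Sc.g ≫ e.hom) := by
    simp only [φ', hdk, zero_comp, sub_zero]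
    infer_instance
  refine HomIndependent.of_mono_comp_of_succAbove (Sc.g ≫ e.hom) k
    (fun i => by rw [← Category.assoc, hφ'g, zero_comp]) ?_
  rw [hψ]
  exact (ih ψ hψind).comp_mono

theorem HomIndependent.of_filtBy {D : A} (hD : ¬ IsZero D)
    (hdiv : ∀ a : D ⟶ D, a ≠ 0 → IsIso a) {S : A → Prop}
    (hS : ∀ Y, S Y → (∀ a : D ⟶ Y, a = 0) ∨ Nonempty (Y ≅ D)) {X : A} (hX : FiltBy A S X)
    {r : ℕ} {φ : Fin r → (D ⟶ X)} (h : HomIndependent D φ) (Z : A) : HomIndependent Z φ := by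
  induction hX generalizing r with
  | of_isZero Y hY =>
    have := h.isEmpty_of_isZero hD hY
    exact fun _ _ i => isEmptyElim i
  | step Sc hse _ hS₃ ih =>
    by_cases hg : ∀ i, φ i ≫ Sc.g = 0
    · have := hse.mono_f
      have hφ : φ = fun i => hse.exact.lift (φ i) (hg i) ≫ Sc.f :=
        funext fun i => (hse.exact.lift_f _ _).symm
      rw [hφ] at h ⊢
      exact (ih h.of_comp).comp_mono
    · push Not at hg
      obtain ⟨k, hk⟩ := hg
      obtain ⟨m, rfl⟩ := Nat.exists_eq_succ_of_ne_zero k.pos.ne'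
      rcases hS _ hS₃ with h0 | ⟨⟨e⟩⟩
      · exact absurd (h0 _) hk
      · exact h.of_shortExact_of_iso hdiv hse e (fun _ => ih) k hk

namespace HighestWeightStructure

variable (H : HighestWeightStructure A) {l : Fin H.n}

theorem isZero_U_of_isTop (hl : IsTop l) : IsZero (H.U l) :=
  FiltBy.isZero_of_forall_not (fun _ ⟨j, hj, _⟩ => (hl j).not_gt hj) (H.U_filt l)

theorem isIso_π_of_isTop (hl : IsTop l) : IsIso (H.π l) :=
  have := (H.shortExact l).epi_g
  have := (H.shortExact l).exact.mono_g ((H.isZero_U_of_isTop hl).eq_of_src _ _)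
  isIso_of_mono_of_epi _

theorem projective_P (i : Fin H.n) : Projective (H.P i) :=
  have := H.projective
  ((biproduct.bicone H.P).retract i).projective

theorem projective_Δ_of_isTop (hl : IsTop l) : Projective (H.Δ l) :=
  have := H.isIso_π_of_isTop hl
  Projective.of_iso (asIso (H.π l)) (H.projective_P l)

theorem hom_eq_zero_or_nonempty_iso_of_isTop (hl : IsTop l) {Y : A}
    (hY : ∃ j, Nonempty (Y ≅ H.Δ j)) : (∀ a : H.Δ l ⟶ Y, a = 0) ∨ Nonempty (Y ≅ H.Δ l) := by
  obtain ⟨j, ⟨e⟩⟩ := hY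
  rcases eq_or_ne j l with rfl | hj
  · exact Or.inr ⟨e⟩
  · refine Or.inl fun a => ?_
    rw [← Category.comp_id a, ← e.hom_inv_id, ← Category.assoc,
      H.hom_vanish l j ((hl j).lt_of_ne hj) (a ≫ e.hom), zero_comp]

end HighestWeightStructure

end Abelian

theorem hwc_last_standard_projective_and_counit_mono
    (H : HighestWeightStructure A) (hn : 0 < H.n) :
    Projective (H.Δ ⟨H.n - 1, by omega⟩) ∧
    (∀ X : A, FiltBy A (fun Z => ∃ j, Nonempty (Z ≅ H.Δ j)) X →
      ∀ (r : ℕ) (φ : Fin r → (H.Δ ⟨H.n - 1, by omega⟩ ⟶ X)),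
        (∀ c : Fin r → (H.Δ ⟨H.n - 1, by omega⟩ ⟶ H.Δ ⟨H.n - 1, by omega⟩),
            (∑ i, c i ≫ φ i) = 0 → ∀ i, c i = 0) →
        Mono (biproduct.desc φ)) := by
  have hl : IsTop (⟨H.n - 1, by omega⟩ : Fin H.n) := fun j =>
    Fin.le_def.2 (Nat.le_sub_one_of_lt j.isLt)
  refine ⟨H.projective_Δ_of_isTop hl, fun X hX r φ hφ => ?_⟩
  rw [mono_biproduct_desc_iff_homIndependent]
  exact HomIndependent.of_filtBy (H.endo_division _).1 (H.endo_division _).2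
    (fun _ => H.hom_eq_zero_or_nonempty_iso_of_isTop hl) hX hφ
end

section
/- Let (i_*, i^*, j_!, j^!) be a colocalisation sequence of abelian categories A' → A → A'' where A has enough projectives and j^! preserves projectivity. If for every projective object X of A the counit j_!j^!(X) → X is a monomorphism, then the full additive subcategory Filt(P', P'') of A generated under extensions by the projectives of A' (embedded via i_*) and the projectives of A'' (embedded via j_!) contains every projective object of A; in particular every projective X sits in a short exact sequence 0 → j_!j^!(X) → X → i_*i^*(X) → 0. -/
/-!
Write `c : j_! j^! X ⟶ X` for the counit and `u : X ⟶ i_* i^* X` for the unit. Under the adjunction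
`c ≫ u` corresponds to a morphism into `j^! i_* i^* X = 0`, so it vanishes; equivalently `i^* c = 0`.
As `j_!` is fully faithful, `j^! c` is invertible, so the exact functor `j^!` kills `coker c`, which
therefore lies in the essential image of `i_*`, where the unit of `i^* ⊣ i_*` is invertible. The
right exact functor `i^*` turns `X ⟶ coker c` into the cokernel of `i^* c = 0`, an isomorphism; by
naturality of the unit, `u` is `X ⟶ coker c` followed by an isomorphism. Hence `c, u` form a short
exact sequence once `c` is mono, with outer terms `j_! j^! X` and `i_* i^* X`, where `i^* X` is
projective because the right adjoint `i_*` preserves epimorphisms.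
-/

open CategoryTheory Limits

universe v u

variable {A' A A'' : Type u} [Category.{v} A'] [Category.{v} A] [Category.{v} A'']
variable [Abelian A'] [Abelian A] [Abelian A'']

/-- The smallest extension-closed collection of objects containing the zero
objects and the objects satisfying `S`. -/
inductive ExtClosure (S : A → Prop) : A → Prop
  | of (X : A) : S X → ExtClosure S X
  | of_isZero (X : A) : IsZero X → ExtClosure S X
  | step (Sc : ShortComplex A) : Sc.ShortExact →
      ExtClosure S Sc.X₁ → ExtClosure S Sc.X₃ → ExtClosure S Sc.X₂

namespace CategoryTheory.Adjunction

variable {C D : Type*} [Category C] [Category D] {F : C ⥤ D} {G : D ⥤ C}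

lemma eq_zero_of_isZero_right_obj [HasZeroMorphisms D] (adj : F ⊣ G) {Y : C} {Z : D}
    (f : F.obj Y ⟶ Z) (hZ : IsZero (G.obj Z)) : f = 0 :=
  (adj.homEquiv _ _).injective (hZ.eq_of_tgt _ _)

lemma map_eq_zero_of_comp_unit_eq_zero [HasZeroMorphisms C] [HasZeroMorphisms D] (adj : F ⊣ G)
    {X Y : C} (f : X ⟶ Y) (hf : f ≫ adj.unit.app Y = 0) : F.map f = 0 := by
  have := adj.isRightAdjoint
  apply (adj.homEquiv _ _).injective
  rw [homEquiv_unit, homEquiv_unit, G.map_zero, comp_zero, ← hf, ← adj.unit_naturality]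

end CategoryTheory.Adjunction

section PreservesCokernel

variable {C D : Type*} [Category C] [Category D] [HasZeroMorphisms C] [HasZeroMorphisms D]
  (F : C ⥤ D) [F.PreservesZeroMorphisms] {X Y : C} (f : X ⟶ Y) [HasCokernel f]
  [PreservesColimit (parallelPair f 0) F]

lemma isIso_map_cokernel_π_of_map_eq_zero (hf : F.map f = 0) : IsIso (F.map (cokernel.π f)) := by
  have := cokernel.π_of_zero hf
  rw [← PreservesCokernel.π_iso_hom] at this
  exact IsIso.of_isIso_comp_right _ (PreservesCokernel.iso F f).hom

lemma isZero_obj_cokernel_of_epi_map [HasZeroObject D] [Epi (F.map f)] :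
    IsZero (F.obj (cokernel f)) :=
  (isZero_cokernel_of_epi (F.map f)).of_iso (PreservesCokernel.iso F f)

end PreservesCokernel

section Colocalisation

variable {C' C C'' : Type*} [Category C'] [Category C] [Category C'']
  {i : C' ⥤ C} {q : C ⥤ C''} {p : C ⥤ C'} {jL : C'' ⥤ C}

lemma counit_comp_unit_eq_zero [HasZeroMorphisms C] (adjP : p ⊣ i) (adjJ : jL ⊣ q)
    (hker : ∀ X : C, i.essImage X → IsZero (q.obj X)) (X : C) :
    adjJ.counit.app X ≫ adjP.unit.app X = 0 :=
  adjJ.eq_zero_of_isZero_right_obj _ (hker _ (i.obj_mem_essImage _))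

lemma cokernel_counit_mem_essImage [Abelian C] [Abelian C''] [jL.Full] [jL.Faithful]
    [PreservesFiniteColimits q] (adjJ : jL ⊣ q) (hker : ∀ X : C, IsZero (q.obj X) → i.essImage X)
    (X : C) : i.essImage (cokernel (adjJ.counit.app X)) :=
  hker _ (isZero_obj_cokernel_of_epi_map q _)

lemma isIso_map_cokernel_π_counit [HasZeroMorphisms C'] [Abelian C] (adjP : p ⊣ i)
    (adjJ : jL ⊣ q) (hker : ∀ X : C, i.essImage X → IsZero (q.obj X)) (X : C) :
    IsIso (p.map (cokernel.π (adjJ.counit.app X))) :=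
  have := adjP.isLeftAdjoint
  isIso_map_cokernel_π_of_map_eq_zero p _
    (adjP.map_eq_zero_of_comp_unit_eq_zero _ (counit_comp_unit_eq_zero adjP adjJ hker X))

theorem shortExact_counit_unit [HasZeroMorphisms C'] [Abelian C] [Abelian C''] [i.Full]
    [i.Faithful] [jL.Full] [jL.Faithful] [PreservesFiniteColimits q] (adjP : p ⊣ i)
    (adjJ : jL ⊣ q) (hker : ∀ X : C, IsZero (q.obj X) ↔ i.essImage X) (X : C)
    [Mono (adjJ.counit.app X)] :
    (ShortComplex.mk _ _ (counit_comp_unit_eq_zero adjP adjJ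
      (fun Y => (hker Y).2) X)).ShortExact := by
  have := adjP.isIso_unit_app_iff_mem_essImage.2
    (cokernel_counit_mem_essImage adjJ (fun Y => (hker Y).1) X)
  have := isIso_map_cokernel_π_counit adjP adjJ (fun Y => (hker Y).2) X
  let e : cokernel (adjJ.counit.app X) ≅ i.obj (p.obj X) :=
    asIso (adjP.unit.app (cokernel (adjJ.counit.app X))) ≪≫
      (i.mapIso (asIso (p.map (cokernel.π _)))).symm
  have hcok : (ShortComplex.cokernelSequence (adjJ.counit.app X)).ShortExact :=
    { exact := ShortComplex.cokernelSequence_exact _, mono_f := ‹_› }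
  refine ShortComplex.shortExact_of_iso (S₁ := ShortComplex.cokernelSequence (adjJ.counit.app X))
    (ShortComplex.isoMk (Iso.refl _) (Iso.refl _) e ?_ ?_) hcok
  · simp [ShortComplex.cokernelSequence]
  · simp [e, ShortComplex.cokernelSequence, ← adjP.unit_naturality_assoc]

end Colocalisation

theorem projectives_filtered_of_counit_mono
    -- the colocalisation sequence
    (i : A' ⥤ A) (q : A ⥤ A'')
    (_ : PreservesFiniteColimits i)
    (_ : PreservesFiniteColimits q)
    (p : A ⥤ A') (adjP : p ⊣ i)
    (jL : A'' ⥤ A) (adjJ : jL ⊣ q)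
    (_ : i.Full) (_ : i.Faithful) (_ : jL.Full) (_ : jL.Faithful)
    (hker : ∀ X : A, IsZero (q.obj X) ↔ i.essImage X)
    -- `A` has enough projectives and `j^!` preserves projectivity
    (hq : ∀ X : A, Projective X → Projective (q.obj X))
    -- the counit is a monomorphism on projectives
    (hmono : ∀ X : A, Projective X → Mono (adjJ.counit.app X)) :
    ∀ X : A, Projective X →
      (ExtClosure (fun Z : A =>
          (∃ P' : A', Projective P' ∧ Nonempty (Z ≅ i.obj P')) ∨
          (∃ P'' : A'', Projective P'' ∧ Nonempty (Z ≅ jL.obj P''))) X ∧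
        ∃ w : adjJ.counit.app X ≫ adjP.unit.app X = 0,
          (ShortComplex.mk (adjJ.counit.app X) (adjP.unit.app X) w).ShortExact) := by
  intro X hX
  have := hmono X hX
  have hSE := shortExact_counit_unit adjP adjJ hker X
  refine ⟨ExtClosure.step _ hSE ?_ ?_, _, hSE⟩
  · exact .of _ (.inr ⟨q.obj X, hq X hX, ⟨Iso.refl _⟩⟩)
  · exact .of _ (.inl ⟨p.obj X, adjP.map_projective X hX, ⟨Iso.refl _⟩⟩)
end
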